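/- arXiv:2312.01088 — 6 statements merged into one kernel-verified Lean document; each statement's English description precedes it below -/
import Mathlib

section
/- Let C be a monoidal category that is abelian, such that the unit object 𝟙 is a projective object and, for every object W of C, the functor − ⊗ W preserves epimorphisms. Then every object R of C admitting a left dual — i.e., for which there exist an object R* and morphisms e_R : R* ⊗ R ⟶ 𝟙 and i_R : 𝟙 ⟶ R ⊗ R* satisfying the triangle identities ρ_R ∘ (id_R ⊗ e_R) ∘ α_{R,R*,R}⁻¹ ∘ (i_R ⊗ id_R) ∘ λ_R⁻¹ = id_R and λ_{R*} ∘ (e_R ⊗ id_{R*}) ∘ α_{R*,R,R*} ∘ (id_{R*} ⊗ i_R) ∘ ρ_{R*}⁻¹ = id_{R*} — is a projective object of C. -/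
/-!
`f ↦ i ≫ f ▷ R'` embeds `R ⟶ X` into `𝟙_ C ⟶ X ⊗ R'` naturally in `X`, with a left inverse
`evalUncurry e` built from the evaluation; the zigzag identity is exactly what makes it a left
inverse. A lifting problem for `R` along an epimorphism `p` thus becomes one for `𝟙_ C` along
`p ▷ R'`, which is again an epimorphism.
-/

open CategoryTheory MonoidalCategory

namespace CategoryTheory.MonoidalCategory

variable {C : Type*} [Category C] [MonoidalCategory C] {R R' : C}

def evalUncurry (e : R' ⊗ R ⟶ 𝟙_ C) {X : C} (g : 𝟙_ C ⟶ X ⊗ R') : R ⟶ X :=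
  (λ_ R).inv ≫ g ▷ R ≫ (α_ X R' R).hom ≫ X ◁ e ≫ (ρ_ X).hom

lemma evalUncurry_comp (e : R' ⊗ R ⟶ 𝟙_ C) {X Y : C} (g : 𝟙_ C ⟶ X ⊗ R') (p : X ⟶ Y) :
    evalUncurry e g ≫ p = evalUncurry e (g ≫ p ▷ R') := by
  simp only [evalUncurry, Category.assoc, comp_whiskerRight]
  rw [← rightUnitor_naturality, whisker_exchange_assoc, ← associator_naturality_left_assoc]

lemma evalUncurry_coev_comp (e : R' ⊗ R ⟶ 𝟙_ C) (i : 𝟙_ C ⟶ R ⊗ R')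
    (zigzag : (λ_ R).inv ≫ i ▷ R ≫ (α_ R R' R).hom ≫ R ◁ e ≫ (ρ_ R).hom = 𝟙 R)
    {X : C} (f : R ⟶ X) : evalUncurry e (i ≫ f ▷ R') = f := by
  rw [← evalUncurry_comp, evalUncurry, zigzag, Category.id_comp]

end CategoryTheory.MonoidalCategory

theorem rigid_object_is_projective_general {C : Type*} [Category C] [MonoidalCategory C]
    (hunit : Projective (𝟙_ C))
    (htens : ∀ (W : C) {A B : C} (p : A ⟶ B), Epi p → Epi (p ▷ W))
    (R R' : C) (e : R' ⊗ R ⟶ 𝟙_ C) (i : 𝟙_ C ⟶ R ⊗ R')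
    (h1 : (λ_ R).inv ≫ (i ⊗ₘ 𝟙 R) ≫ (α_ R R' R).hom ≫ (𝟙 R ⊗ₘ e) ≫ (ρ_ R).hom = 𝟙 R) :
    Projective R := by
  have zigzag : (λ_ R).inv ≫ i ▷ R ≫ (α_ R R' R).hom ≫ R ◁ e ≫ (ρ_ R).hom = 𝟙 R := by
    simpa only [tensorHom_id, id_tensorHom] using h1
  refine ⟨fun {W X} f p hp => ?_⟩
  have : Epi (p ▷ R') := htens R' p hp
  obtain ⟨g, hg⟩ := hunit.factors (i ≫ f ▷ R') (p ▷ R')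
  exact ⟨evalUncurry e g, by rw [evalUncurry_comp, hg, evalUncurry_coev_comp e i zigzag]⟩

/-- **Lemma 2.12.** In an abelian monoidal category whose unit object is projective and
whose tensoring functors `- ⊗ W` preserve epimorphisms, every object admitting a left dual
is projective. -/
theorem rigid_object_is_projective {C : Type*} [Category C] [MonoidalCategory C] [Abelian C]
    (hunit : Projective (𝟙_ C))
    (htens : ∀ (W : C) {A B : C} (p : A ⟶ B), Epi p → Epi (p ▷ W))
    (R R' : C) (e : R' ⊗ R ⟶ 𝟙_ C) (i : 𝟙_ C ⟶ R ⊗ R')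
    (h1 : (λ_ R).inv ≫ (i ⊗ₘ 𝟙 R) ≫ (α_ R R' R).hom ≫ (𝟙 R ⊗ₘ e) ≫ (ρ_ R).hom = 𝟙 R)
    (h2 : (ρ_ R').inv ≫ (𝟙 R' ⊗ₘ i) ≫ (α_ R' R R').inv ≫ (e ⊗ₘ 𝟙 R') ≫ (λ_ R').hom = 𝟙 R') :
    Projective R :=
  rigid_object_is_projective_general hunit htens R R' e i h1
end

section
/- Let C be a monoidal category that is preadditive and whose tensor product is additive in each variable on morphisms. Let X, W, W̃ be objects together with morphisms ι : W ⟶ X, π : X ⟶ W, ι̃ : W̃ ⟶ X, π̃ : X ⟶ W̃ exhibiting X as a biproduct of W and W̃, i.e., π ∘ ι = id_W, π̃ ∘ ι̃ = id_{W̃}, π̃ ∘ ι = 0, π ∘ ι̃ = 0, and ι ∘ π + ι̃ ∘ π̃ = id_X. Suppose (e_X, i_X) is a self-duality datum for X, (e_{W̃}, i_{W̃}) is a self-duality datum for W̃, and every morphism from W to W̃ is zero. Then e_W := e_X ∘ (ι ⊗ ι) and i_W := (π ⊗ π) ∘ i_X form a self-duality datum for W; in particular, W is rigid and self-dual. -/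
/-!
Let `p = π ≫ ι` be the idempotent of `X` cutting out `W`. The zigzag composites of the
transported pair equal `ι ≫ (zigzag of X) ≫ π = 𝟙 W` as soon as `e_X` cannot tell `p` from
`𝟙 X` when paired against `W` on either side. Since `𝟙 X - p = π̃ ≫ ι̃`, this reduces to
`e_X ∘ (ι̃ ⊗ ι) = 0` and `e_X ∘ (ι ⊗ ι̃) = 0`, and these hold because the self-duality of `W̃`
identifies `Hom(W̃ ⊗ W, 𝟙)` and `Hom(W ⊗ W̃, 𝟙)` with `Hom(W, W̃) = 0`.
-/

open CategoryTheory MonoidalCategory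

section

variable {C : Type*} [Category C] [MonoidalCategory C]

def IsSelfDualityDatum {X : C} (e : X ⊗ X ⟶ 𝟙_ C) (i : 𝟙_ C ⟶ X ⊗ X) : Prop :=
  (λ_ X).inv ≫ (i ⊗ₘ 𝟙 X) ≫ (α_ X X X).hom ≫ (𝟙 X ⊗ₘ e) ≫ (ρ_ X).hom = 𝟙 X ∧
    (ρ_ X).inv ≫ (𝟙 X ⊗ₘ i) ≫ (α_ X X X).inv ≫ (e ⊗ₘ 𝟙 X) ≫ (λ_ X).hom = 𝟙 X

abbrev IsSelfDualityDatum.exactPairing {X : C} {e : X ⊗ X ⟶ 𝟙_ C} {i : 𝟙_ C ⟶ X ⊗ X}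
    (h : IsSelfDualityDatum e i) : ExactPairing X X where
  coevaluation' := i
  evaluation' := e
  coevaluation_evaluation' := by
    rw [← cancel_epi (ρ_ X).inv, ← cancel_mono (λ_ X).hom]
    simpa using h.2
  evaluation_coevaluation' := by
    rw [← cancel_epi (λ_ X).inv, ← cancel_mono (ρ_ X).hom]
    simpa using h.1

theorem subsingleton_tensor_hom_unit_left (X Y Y' : C) [ExactPairing Y Y']
    [Subsingleton (X ⟶ Y)] : Subsingleton (Y' ⊗ X ⟶ 𝟙_ C) :=
  ((tensorLeftHomEquiv X Y Y' (𝟙_ C)).trans ((Iso.refl X).homCongr (ρ_ Y))).subsingleton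

theorem subsingleton_tensor_hom_unit_right (X Y Y' : C) [ExactPairing Y Y']
    [Subsingleton (X ⟶ Y')] : Subsingleton (X ⊗ Y ⟶ 𝟙_ C) :=
  ((tensorRightHomEquiv X Y Y' (𝟙_ C)).trans ((Iso.refl X).homCongr (λ_ Y'))).subsingleton

theorem left_zigzag_retract_eq {X W : C} (e : X ⊗ X ⟶ 𝟙_ C) (i : 𝟙_ C ⟶ X ⊗ X)
    (ι : W ⟶ X) (π : X ⟶ W) (h : ((π ≫ ι) ⊗ₘ ι) ≫ e = (X ◁ ι) ≫ e) :
    (λ_ W).inv ≫ ((i ≫ (π ⊗ₘ π)) ⊗ₘ 𝟙 W) ≫ (α_ W W W).hom ≫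
        (𝟙 W ⊗ₘ ((ι ⊗ₘ ι) ≫ e)) ≫ (ρ_ W).hom =
      ι ≫ ((λ_ X).inv ≫ (i ⊗ₘ 𝟙 X) ≫ (α_ X X X).hom ≫ (𝟙 X ⊗ₘ e) ≫ (ρ_ X).hom) ≫ π :=
  calc _ = (λ_ W).inv ≫ i ▷ W ≫ (α_ X X W).hom ≫ π ▷ (X ⊗ W) ≫
        W ◁ (((π ≫ ι) ⊗ₘ ι) ≫ e) ≫ (ρ_ W).hom := by
        simp only [MonoidalCategory.tensorHom_def, comp_whiskerRight, whiskerLeft_comp]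
        monoidal
    _ = (λ_ W).inv ≫ i ▷ W ≫ (α_ X X W).hom ≫ X ◁ X ◁ ι ≫ X ◁ e ≫ π ▷ _ ≫ (ρ_ W).hom := by
        rw [← whisker_exchange_assoc, h, whiskerLeft_comp_assoc]
    _ = ι ≫ (λ_ X).inv ≫ i ▷ X ≫ (α_ X X X).hom ≫ X ◁ e ≫ (ρ_ X).hom ≫ π := by
        rw [← associator_naturality_right_assoc, ← whisker_exchange_assoc,
          leftUnitor_inv_naturality_assoc, rightUnitor_naturality]
    _ = _ := by simp

theorem right_zigzag_retract_eq {X W : C} (e : X ⊗ X ⟶ 𝟙_ C) (i : 𝟙_ C ⟶ X ⊗ X)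
    (ι : W ⟶ X) (π : X ⟶ W) (h : (ι ⊗ₘ (π ≫ ι)) ≫ e = (ι ▷ X) ≫ e) :
    (ρ_ W).inv ≫ (𝟙 W ⊗ₘ (i ≫ (π ⊗ₘ π))) ≫ (α_ W W W).inv ≫
        (((ι ⊗ₘ ι) ≫ e) ⊗ₘ 𝟙 W) ≫ (λ_ W).hom =
      ι ≫ ((ρ_ X).inv ≫ (𝟙 X ⊗ₘ i) ≫ (α_ X X X).inv ≫ (e ⊗ₘ 𝟙 X) ≫ (λ_ X).hom) ≫ π :=
  calc _ = (ρ_ W).inv ≫ W ◁ i ≫ (α_ W X X).inv ≫ (W ⊗ X) ◁ π ≫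
        ((ι ⊗ₘ (π ≫ ι)) ≫ e) ▷ W ≫ (λ_ W).hom := by
        simp only [MonoidalCategory.tensorHom_def', comp_whiskerRight, whiskerLeft_comp]
        monoidal
    _ = (ρ_ W).inv ≫ W ◁ i ≫ (α_ W X X).inv ≫ ι ▷ X ▷ X ≫ e ▷ X ≫ _ ◁ π ≫ (λ_ W).hom := by
        rw [whisker_exchange_assoc, h, comp_whiskerRight_assoc]
    _ = ι ≫ (ρ_ X).inv ≫ X ◁ i ≫ (α_ X X X).inv ≫ e ▷ X ≫ (λ_ X).hom ≫ π := by
        rw [← associator_inv_naturality_left_assoc, whisker_exchange_assoc,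
          rightUnitor_inv_naturality_assoc, leftUnitor_naturality]
    _ = _ := by simp

theorem IsSelfDualityDatum.of_retract {X W : C} {e : X ⊗ X ⟶ 𝟙_ C} {i : 𝟙_ C ⟶ X ⊗ X}
    (h : IsSelfDualityDatum e i) {ι : W ⟶ X} {π : X ⟶ W} (hπι : ι ≫ π = 𝟙 W)
    (hleft : ((π ≫ ι) ⊗ₘ ι) ≫ e = (X ◁ ι) ≫ e) (hright : (ι ⊗ₘ (π ≫ ι)) ≫ e = (ι ▷ X) ≫ e) :
    IsSelfDualityDatum ((ι ⊗ₘ ι) ≫ e) (i ≫ (π ⊗ₘ π)) := by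
  constructor
  · rw [left_zigzag_retract_eq e i ι π hleft, h.1, Category.id_comp, hπι]
  · rw [right_zigzag_retract_eq e i ι π hright, h.2, Category.id_comp, hπι]

variable [Preadditive C] [MonoidalPreadditive C]

theorem tensorHom_comp_eq_whiskerLeft_comp_of_add_eq_id {X W W' Y Z T : C}
    {ι : W ⟶ X} {π : X ⟶ W} {ι' : W' ⟶ X} {π' : X ⟶ W'} (hsum : π ≫ ι + π' ≫ ι' = 𝟙 X)
    (f : Y ⟶ Z) (e : X ⊗ Z ⟶ T) (h : (ι' ⊗ₘ f) ≫ e = 0) :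
    ((π ≫ ι) ⊗ₘ f) ≫ e = (X ◁ f) ≫ e := by
  have : ((π' ≫ ι') ⊗ₘ f) ≫ e = 0 := by
    rw [← Category.id_comp f, ← tensorHom_comp_tensorHom, Category.assoc, h, Limits.comp_zero]
  rw [← id_tensorHom, ← hsum, MonoidalPreadditive.add_tensor, Preadditive.add_comp, this, add_zero]

theorem tensorHom_comp_eq_whiskerRight_comp_of_add_eq_id {X W W' Y Z T : C}
    {ι : W ⟶ X} {π : X ⟶ W} {ι' : W' ⟶ X} {π' : X ⟶ W'} (hsum : π ≫ ι + π' ≫ ι' = 𝟙 X)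
    (f : Y ⟶ Z) (e : Z ⊗ X ⟶ T) (h : (f ⊗ₘ ι') ≫ e = 0) :
    (f ⊗ₘ (π ≫ ι)) ≫ e = (f ▷ X) ≫ e := by
  have : (f ⊗ₘ (π' ≫ ι')) ≫ e = 0 := by
    rw [← Category.id_comp f, ← tensorHom_comp_tensorHom, Category.assoc, h, Limits.comp_zero]
  rw [← tensorHom_id, ← hsum, MonoidalPreadditive.tensor_add, Preadditive.add_comp, this, add_zero]

end

theorem direct_summand_self_dual_general {C : Type*} [Category C] [MonoidalCategory C]
    [Preadditive C] [MonoidalPreadditive C]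
    (X W Wt : C)
    (ι : W ⟶ X) (π : X ⟶ W) (ιt : Wt ⟶ X) (πt : X ⟶ Wt)
    (hπι : ι ≫ π = 𝟙 W)
    (hsum : π ≫ ι + πt ≫ ιt = 𝟙 X)
    (eX : X ⊗ X ⟶ 𝟙_ C) (iX : 𝟙_ C ⟶ X ⊗ X)
    (hX1 : (λ_ X).inv ≫ (iX ⊗ₘ 𝟙 X) ≫ (α_ X X X).hom ≫ (𝟙 X ⊗ₘ eX) ≫ (ρ_ X).hom = 𝟙 X)
    (hX2 : (ρ_ X).inv ≫ (𝟙 X ⊗ₘ iX) ≫ (α_ X X X).inv ≫ (eX ⊗ₘ 𝟙 X) ≫ (λ_ X).hom = 𝟙 X)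
    (eWt : Wt ⊗ Wt ⟶ 𝟙_ C) (iWt : 𝟙_ C ⟶ Wt ⊗ Wt)
    (hWt1 : (λ_ Wt).inv ≫ (iWt ⊗ₘ 𝟙 Wt) ≫ (α_ Wt Wt Wt).hom ≫ (𝟙 Wt ⊗ₘ eWt) ≫ (ρ_ Wt).hom = 𝟙 Wt)
    (hWt2 : (ρ_ Wt).inv ≫ (𝟙 Wt ⊗ₘ iWt) ≫ (α_ Wt Wt Wt).inv ≫ (eWt ⊗ₘ 𝟙 Wt) ≫ (λ_ Wt).hom = 𝟙 Wt)
    (hzero : ∀ f : W ⟶ Wt, f = 0) :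
    ((λ_ W).inv ≫ ((iX ≫ (π ⊗ₘ π)) ⊗ₘ 𝟙 W) ≫ (α_ W W W).hom ≫
        (𝟙 W ⊗ₘ ((ι ⊗ₘ ι) ≫ eX)) ≫ (ρ_ W).hom = 𝟙 W) ∧
    ((ρ_ W).inv ≫ (𝟙 W ⊗ₘ (iX ≫ (π ⊗ₘ π))) ≫ (α_ W W W).inv ≫
        (((ι ⊗ₘ ι) ≫ eX) ⊗ₘ 𝟙 W) ≫ (λ_ W).hom = 𝟙 W) := by
  have : Subsingleton (W ⟶ Wt) := ⟨fun f g => (hzero f).trans (hzero g).symm⟩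
  have : ExactPairing Wt Wt := IsSelfDualityDatum.exactPairing ⟨hWt1, hWt2⟩
  have hWtW : (ιt ⊗ₘ ι) ≫ eX = 0 :=
    @Subsingleton.elim _ (subsingleton_tensor_hom_unit_left W Wt Wt) _ _
  have hWWt : (ι ⊗ₘ ιt) ≫ eX = 0 :=
    @Subsingleton.elim _ (subsingleton_tensor_hom_unit_right W Wt Wt) _ _
  exact IsSelfDualityDatum.of_retract ⟨hX1, hX2⟩ hπι
    (tensorHom_comp_eq_whiskerLeft_comp_of_add_eq_id hsum ι eX hWtW)
    (tensorHom_comp_eq_whiskerRight_comp_of_add_eq_id hsum ι eX hWWt)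

/-- **Lemma 4.3.** If `X = W ⊕ W̃` in a preadditive monoidal category, `X` and `W̃` are
rigid and self-dual, and `Hom(W, W̃) = 0`, then `e_W := e_X ∘ (ι ⊗ ι)` and
`i_W := (π ⊗ π) ∘ i_X` form a self-duality datum for `W`; in particular `W` is rigid and
self-dual. -/
theorem direct_summand_self_dual {C : Type*} [Category C] [MonoidalCategory C]
    [Preadditive C] [MonoidalPreadditive C]
    (X W Wt : C)
    (ι : W ⟶ X) (π : X ⟶ W) (ιt : Wt ⟶ X) (πt : X ⟶ Wt)
    (hπι : ι ≫ π = 𝟙 W) (hπtιt : ιt ≫ πt = 𝟙 Wt)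
    (hιπt : ι ≫ πt = 0) (hιtπ : ιt ≫ π = 0)
    (hsum : π ≫ ι + πt ≫ ιt = 𝟙 X)
    (eX : X ⊗ X ⟶ 𝟙_ C) (iX : 𝟙_ C ⟶ X ⊗ X)
    (hX1 : (λ_ X).inv ≫ (iX ⊗ₘ 𝟙 X) ≫ (α_ X X X).hom ≫ (𝟙 X ⊗ₘ eX) ≫ (ρ_ X).hom = 𝟙 X)
    (hX2 : (ρ_ X).inv ≫ (𝟙 X ⊗ₘ iX) ≫ (α_ X X X).inv ≫ (eX ⊗ₘ 𝟙 X) ≫ (λ_ X).hom = 𝟙 X)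
    (eWt : Wt ⊗ Wt ⟶ 𝟙_ C) (iWt : 𝟙_ C ⟶ Wt ⊗ Wt)
    (hWt1 : (λ_ Wt).inv ≫ (iWt ⊗ₘ 𝟙 Wt) ≫ (α_ Wt Wt Wt).hom ≫ (𝟙 Wt ⊗ₘ eWt) ≫ (ρ_ Wt).hom = 𝟙 Wt)
    (hWt2 : (ρ_ Wt).inv ≫ (𝟙 Wt ⊗ₘ iWt) ≫ (α_ Wt Wt Wt).inv ≫ (eWt ⊗ₘ 𝟙 Wt) ≫ (λ_ Wt).hom = 𝟙 Wt)
    (hzero : ∀ f : W ⟶ Wt, f = 0) :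
    ((λ_ W).inv ≫ ((iX ≫ (π ⊗ₘ π)) ⊗ₘ 𝟙 W) ≫ (α_ W W W).hom ≫
        (𝟙 W ⊗ₘ ((ι ⊗ₘ ι) ≫ eX)) ≫ (ρ_ W).hom = 𝟙 W) ∧
    ((ρ_ W).inv ≫ (𝟙 W ⊗ₘ (iX ≫ (π ⊗ₘ π))) ≫ (α_ W W W).inv ≫
        (((ι ⊗ₘ ι) ≫ eX) ⊗ₘ 𝟙 W) ≫ (λ_ W).hom = 𝟙 W) :=
  direct_summand_self_dual_general X W Wt ι π ιt πt hπι hsum eX iX hX1 hX2 eWt iWt hWt1 hWt2 hzero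
end

section
/- Let R be a ring, W a simple left R-module, and P a projective left R-module of finite length which is indecomposable, i.e., whenever A and B are submodules of P with A ⊓ B = ⊥ and A ⊔ B = ⊤, then A = ⊥ or B = ⊥. Let p : P → W be a surjective R-linear map. Then (P, p) is a projective cover of W: for every projective left R-module Q and every surjective R-linear map π : Q → W, there exists a surjective R-linear map f : Q → P with p ∘ f = π. -/
universe u v w x

/-- **Lemma 4.5.** If `W` is a simple module, `P` is an indecomposable projective module of
finite length, and `p : P → W` is surjective, then `(P, p)` is a projective cover of `W`:
any surjection `π` from a projective module `Q` onto `W` factors as `π = p ∘ f` with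
`f : Q → P` surjective. -/
theorem projective_cover_criterion {R : Type u} [Ring R]
    {W : Type v} [AddCommGroup W] [Module R W] [IsSimpleModule R W]
    {P : Type w} [AddCommGroup P] [Module R P]
    (hproj : Module.Projective R P)
    (hfl : IsFiniteLength R P)
    (hindec : ∀ A B : Submodule R P, A ⊓ B = ⊥ → A ⊔ B = ⊤ → A = ⊥ ∨ B = ⊥)
    (p : P →ₗ[R] W) (hp : Function.Surjective p)
    (Q : Type x) [AddCommGroup Q] [Module R Q] (hQ : Module.Projective R Q)
    (π : Q →ₗ[R] W) (hπ : Function.Surjective π) :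
    ∃ f : Q →ₗ[R] P, Function.Surjective f ∧ p ∘ₗ f = π := by
  obtain ⟨hNoeth, hArt⟩ := (isFiniteLength_iff_isNoetherian_isArtinian).mp hfl
  haveI := hNoeth; haveI := hArt; haveI := hproj; haveI := hQ
  -- Key: any submodule N with N ⊔ ker p = ⊤ is all of P (i.e. ker p is superfluous).
  have key : ∀ N : Submodule R P, N ⊔ LinearMap.ker p = ⊤ → N = ⊤ := by
    intro N hNtop
    -- p restricted to N is surjective
    have hsurj : Function.Surjective (p ∘ₗ N.subtype) := by
      intro w
      obtain ⟨x, hx⟩ := hp w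
      have hxmem : x ∈ N ⊔ LinearMap.ker p := hNtop ▸ Submodule.mem_top
      obtain ⟨a, ha, b, hb, rfl⟩ := Submodule.mem_sup.mp hxmem
      exact ⟨⟨a, ha⟩, by
        simp only [LinearMap.comp_apply, Submodule.subtype_apply]
        rw [← hx, map_add, LinearMap.mem_ker.mp hb, add_zero]⟩
    -- lift p through p ∘ N.subtype using projectivity of P
    obtain ⟨g, hg⟩ := Module.projective_lifting_property (p ∘ₗ N.subtype) p hsurj
    set e : P →ₗ[R] P := N.subtype ∘ₗ g with he
    have hpe : p ∘ₗ e = p := by rw [he, ← LinearMap.comp_assoc, hg]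
    have hpen : ∀ n : ℕ, p ∘ₗ (e ^ n) = p := by
      intro n
      induction n with
      | zero => ext x; simp
      | succ n ih =>
        ext x
        have h1 : (e ^ (n + 1)) x = (e ^ n) (e x) := by rw [pow_succ]; rfl
        simp only [LinearMap.comp_apply, h1]
        rw [← LinearMap.comp_apply p, ih, ← LinearMap.comp_apply p, hpe]
    obtain ⟨n, hn⟩ := Filter.eventually_atTop.mp (e.eventually_isCompl_ker_pow_range_pow)
    have hcompl := hn (n + 1) (Nat.le_succ n)
    have hrange_ne : LinearMap.range (e ^ (n + 1)) ≠ ⊥ := by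
      intro hbot
      haveI : Nontrivial W := IsSimpleModule.nontrivial R W
      obtain ⟨w, hw0⟩ := exists_ne (0 : W)
      obtain ⟨x, hx⟩ := hp w
      have hpw : p ((e ^ (n + 1)) x) = w := by
        rw [← LinearMap.comp_apply, hpen, hx]
      have hz : (e ^ (n + 1)) x = 0 := by
        have hm : (e ^ (n + 1)) x ∈ LinearMap.range (e ^ (n + 1)) := ⟨x, rfl⟩
        rwa [hbot, Submodule.mem_bot] at hm
      rw [hz, map_zero] at hpw
      exact hw0 hpw.symm
    rcases hindec (LinearMap.ker (e ^ (n + 1))) (LinearMap.range (e ^ (n + 1)))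
        (disjoint_iff.mp hcompl.disjoint) (codisjoint_iff.mp hcompl.codisjoint) with hk | hr
    · -- ker = ⊥, so range = ⊤, and range (e^(n+1)) ≤ N
      have htop : LinearMap.range (e ^ (n + 1)) = ⊤ := by
        have := codisjoint_iff.mp hcompl.codisjoint
        rwa [hk, bot_sup_eq] at this
      have hle : LinearMap.range (e ^ (n + 1)) ≤ N := by
        rintro x ⟨y, rfl⟩
        have h2 : (e ^ (n + 1)) y = e ((e ^ n) y) := by rw [pow_succ']; rfl
        rw [h2]
        exact Submodule.coe_mem (g ((e ^ n) y))
      rw [htop] at hle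
      exact top_le_iff.mp hle
    · exact absurd hr hrange_ne
  -- Lift π through p using projectivity of Q
  obtain ⟨f, hf⟩ := Module.projective_lifting_property p π hp
  refine ⟨f, ?_, hf⟩
  have hrange : LinearMap.range f ⊔ LinearMap.ker p = ⊤ := by
    rw [eq_top_iff]
    intro x _
    obtain ⟨q, hq⟩ := hπ (p x)
    refine Submodule.mem_sup.mpr ⟨f q, ⟨q, rfl⟩, x - f q, ?_, by abel⟩
    rw [LinearMap.mem_ker, map_sub, ← LinearMap.comp_apply, hf, hq, sub_self]
  rw [← LinearMap.range_eq_top]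
  exact key _ hrange
end

section
/- Let κ be a nonzero complex number and let U ⊆ ℂ be an open set with 0 ∉ U and 1 ∉ U. Suppose φ₁, φ₂ : ℂ → ℂ are complex differentiable on U and satisfy, for all z ∈ U, κ·φ₁′(z) = (1/2)·(1/z + 1/(1−z))·φ₁(z) − (1/(1−z))·φ₂(z) and κ·φ₂′(z) = −(1/z + 1/(1−z))·φ₁(z) − (1/2)·(3/z − 1/(1−z))·φ₂(z). Then φ₁′ and φ₂′ are complex differentiable on U, and for all z ∈ U: κ²·z·(1−z)·φ₁″(z) − κ·((κ+2)·z − 1)·φ₁′(z) + (κ/(2z) − 3/(4·z·(1−z)))·φ₁(z) = 0, and κ²·z·(1−z)·φ₂″(z) + κ·(κ+1)·(1−2z)·φ₂′(z) − (2κ + 3/(4·z·(1−z)))·φ₂(z) = 0. -/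
/-!
Multiplying the system by `2z(1 - z)` turns it into a system with polynomial coefficients,
`κ p φ₁' = φ₁ - 2zφ₂` and `κ p φ₂' = -2φ₁ - (3 - 4z)φ₂` with `p = 2z(1 - z)`. Solving for
`φᵢ'` exhibits it as a holomorphic function on `U`; differentiating the polynomial identities
once more expresses `φᵢ''` through `φ₁, φ₂, φ₁', φ₂'`, and eliminating `φ₂, φ₂'` (resp. `φ₁, φ₁'`)
with the first-order equations leaves the stated second-order equations.
-/

open Filter Topology

theorem hasDerivAt_of_eventually_mul_eq {𝕜 : Type*} [NontriviallyNormedField 𝕜]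
    {g p q : 𝕜 → 𝕜} {p' q' z : 𝕜} (hp : HasDerivAt p p' z) (hq : HasDerivAt q q' z)
    (hpz : p z ≠ 0) (h : ∀ᶠ w in 𝓝 z, p w * g w = q w) :
    HasDerivAt g ((q' - p' * g z) / p z) z := by
  have hg : g =ᶠ[𝓝 z] fun w => q w / p w := by
    filter_upwards [h, hp.continuousAt.eventually_ne hpz] with w hw hpw
    rw [← hw, mul_div_cancel_left₀ _ hpw]
  refine ((hq.div hp hpz).congr_of_eventuallyEq hg).congr_deriv ?_
  rw [hg.eq_of_nhds]
  field_simp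

namespace KZ

section Algebra

variable {K : Type*} [Field K] [CharZero K] {κ z a b a' b' a'' b'' : K}

theorem clear_denominators_fst (hz : z ≠ 0) (hz₁ : 1 - z ≠ 0)
    (h : κ * a' = (1 / 2) * (1 / z + 1 / (1 - z)) * a - (1 / (1 - z)) * b) :
    κ * (2 * z * (1 - z)) * a' = a - 2 * z * b := by
  rw [mul_right_comm, h]
  field_simp
  ring

theorem clear_denominators_snd (hz : z ≠ 0) (hz₁ : 1 - z ≠ 0)
    (h : κ * b' = -(1 / z + 1 / (1 - z)) * a - (1 / 2) * (3 / z - 1 / (1 - z)) * b) :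
    κ * (2 * z * (1 - z)) * b' = -2 * a - (3 - 4 * z) * b := by
  rw [mul_right_comm, h]
  field_simp
  ring

theorem second_order_fst (hz : z ≠ 0) (hz₁ : 1 - z ≠ 0)
    (ha : κ * (2 * z * (1 - z)) * a' = a - 2 * z * b)
    (hb : κ * (2 * z * (1 - z)) * b' = -2 * a - (3 - 4 * z) * b)
    (ha' : κ * (2 * z * (1 - z)) * a'' = a' - 2 * b - 2 * z * b' - κ * (2 - 4 * z) * a') :
    κ ^ 2 * z * (1 - z) * a'' - κ * ((κ + 2) * z - 1) * a'
      + (κ / (2 * z) - 3 / (4 * z * (1 - z))) * a = 0 := by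
  field_simp
  linear_combination (2 - 2 * κ * (2 - 4 * z) - 4 * ((κ + 2) * z - 1)) * ha - 4 * z * hb
    + 4 * κ * z * (1 - z) * ha'

theorem second_order_snd (hz : z ≠ 0) (hz₁ : 1 - z ≠ 0)
    (ha : κ * (2 * z * (1 - z)) * a' = a - 2 * z * b)
    (hb : κ * (2 * z * (1 - z)) * b' = -2 * a - (3 - 4 * z) * b)
    (hb' : κ * (2 * z * (1 - z)) * b'' =
      -2 * a' + 4 * b - (3 - 4 * z) * b' - κ * (2 - 4 * z) * b') :
    κ ^ 2 * z * (1 - z) * b'' + κ * (κ + 1) * (1 - 2 * z) * b'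
      - (2 * κ + 3 / (4 * z * (1 - z))) * b = 0 := by
  field_simp
  linear_combination -2 * ha - hb + 2 * κ * z * (1 - z) * hb'

end Algebra

variable {κ z : ℂ} {φ₁ φ₂ : ℂ → ℂ}

theorem hasDerivAt_const_mul_two_mul_mul_one_sub (κ z : ℂ) :
    HasDerivAt (fun w => κ * (2 * w * (1 - w))) (κ * (2 - 4 * z)) z :=
  (((hasDerivAt_id' z).const_mul 2).fun_mul
    ((hasDerivAt_id' z).const_sub 1)).const_mul κ |>.congr_deriv (by ring)

theorem second_deriv_fst (hd₁ : DifferentiableAt ℂ φ₁ z) (hd₂ : DifferentiableAt ℂ φ₂ z)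
    (hp : κ * (2 * z * (1 - z)) ≠ 0)
    (h : ∀ᶠ w in 𝓝 z, κ * (2 * w * (1 - w)) * deriv φ₁ w = φ₁ w - 2 * w * φ₂ w) :
    DifferentiableAt ℂ (deriv φ₁) z ∧ κ * (2 * z * (1 - z)) * deriv (deriv φ₁) z =
      deriv φ₁ z - 2 * φ₂ z - 2 * z * deriv φ₂ z - κ * (2 - 4 * z) * deriv φ₁ z := by
  have hq : HasDerivAt (fun w => φ₁ w - 2 * w * φ₂ w)
      (deriv φ₁ z - 2 * φ₂ z - 2 * z * deriv φ₂ z) z :=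
    (hd₁.hasDerivAt.fun_sub (((hasDerivAt_id' z).const_mul 2).fun_mul hd₂.hasDerivAt)).congr_deriv
      (by ring)
  have h₁' := hasDerivAt_of_eventually_mul_eq (hasDerivAt_const_mul_two_mul_mul_one_sub κ z) hq hp h
  exact ⟨h₁'.differentiableAt, by rw [h₁'.deriv, mul_div_cancel₀ _ hp]⟩

theorem second_deriv_snd (hd₁ : DifferentiableAt ℂ φ₁ z) (hd₂ : DifferentiableAt ℂ φ₂ z)
    (hp : κ * (2 * z * (1 - z)) ≠ 0)
    (h : ∀ᶠ w in 𝓝 z, κ * (2 * w * (1 - w)) * deriv φ₂ w = -2 * φ₁ w - (3 - 4 * w) * φ₂ w) :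
    DifferentiableAt ℂ (deriv φ₂) z ∧ κ * (2 * z * (1 - z)) * deriv (deriv φ₂) z =
      -2 * deriv φ₁ z + 4 * φ₂ z - (3 - 4 * z) * deriv φ₂ z - κ * (2 - 4 * z) * deriv φ₂ z := by
  have hq : HasDerivAt (fun w => -2 * φ₁ w - (3 - 4 * w) * φ₂ w)
      (-2 * deriv φ₁ z + 4 * φ₂ z - (3 - 4 * z) * deriv φ₂ z) z :=
    ((hd₁.hasDerivAt.const_mul (-2)).fun_sub
      ((((hasDerivAt_id' z).const_mul 4).const_sub 3).fun_mul hd₂.hasDerivAt)).congr_deriv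
      (by ring)
  have h₂' := hasDerivAt_of_eventually_mul_eq (hasDerivAt_const_mul_two_mul_mul_one_sub κ z) hq hp h
  exact ⟨h₂'.differentiableAt, by rw [h₂'.deriv, mul_div_cancel₀ _ hp]⟩

end KZ

/-- **Theorem 3.2 (analytic content).** If `φ₁, φ₂` are holomorphic on an open set
`U ⊆ ℂ` avoiding `0` and `1` and satisfy the first-order Knizhnik–Zamolodchikov system,
then their derivatives are holomorphic on `U` and `φ₁`, `φ₂` satisfy the stated
second-order differential equations. -/
theorem kz_second_order (κ : ℂ) (hκ : κ ≠ 0) (U : Set ℂ) (hU : IsOpen U)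
    (h0 : (0 : ℂ) ∉ U) (h1 : (1 : ℂ) ∉ U)
    (φ₁ φ₂ : ℂ → ℂ)
    (hd1 : ∀ z ∈ U, DifferentiableAt ℂ φ₁ z)
    (hd2 : ∀ z ∈ U, DifferentiableAt ℂ φ₂ z)
    (ode1 : ∀ z ∈ U, κ * deriv φ₁ z =
      (1 / 2) * (1 / z + 1 / (1 - z)) * φ₁ z - (1 / (1 - z)) * φ₂ z)
    (ode2 : ∀ z ∈ U, κ * deriv φ₂ z =
      -(1 / z + 1 / (1 - z)) * φ₁ z - (1 / 2) * (3 / z - 1 / (1 - z)) * φ₂ z) :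
    (∀ z ∈ U, DifferentiableAt ℂ (deriv φ₁) z) ∧
    (∀ z ∈ U, DifferentiableAt ℂ (deriv φ₂) z) ∧
    (∀ z ∈ U, κ ^ 2 * z * (1 - z) * deriv (deriv φ₁) z
        - κ * ((κ + 2) * z - 1) * deriv φ₁ z
        + (κ / (2 * z) - 3 / (4 * z * (1 - z))) * φ₁ z = 0) ∧
    (∀ z ∈ U, κ ^ 2 * z * (1 - z) * deriv (deriv φ₂) z
        + κ * (κ + 1) * (1 - 2 * z) * deriv φ₂ z
        - (2 * κ + 3 / (4 * z * (1 - z))) * φ₂ z = 0) := by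
  have hz₀ : ∀ z ∈ U, z ≠ 0 := fun z hz h => h0 (h ▸ hz)
  have hz₁ : ∀ z ∈ U, 1 - z ≠ 0 := fun z hz h => h1 (sub_eq_zero.1 h ▸ hz)
  have hp : ∀ z ∈ U, κ * (2 * z * (1 - z)) ≠ 0 := fun z hz =>
    mul_ne_zero hκ (mul_ne_zero (mul_ne_zero two_ne_zero (hz₀ z hz)) (hz₁ z hz))
  have sys₁ : ∀ z ∈ U, κ * (2 * z * (1 - z)) * deriv φ₁ z = φ₁ z - 2 * z * φ₂ z :=
    fun z hz => KZ.clear_denominators_fst (hz₀ z hz) (hz₁ z hz) (ode1 z hz)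
  have sys₂ : ∀ z ∈ U, κ * (2 * z * (1 - z)) * deriv φ₂ z = -2 * φ₁ z - (3 - 4 * z) * φ₂ z :=
    fun z hz => KZ.clear_denominators_snd (hz₀ z hz) (hz₁ z hz) (ode2 z hz)
  have hφ₁'' := fun z hz => KZ.second_deriv_fst (hd1 z hz) (hd2 z hz) (hp z hz)
    (eventually_of_mem (hU.mem_nhds hz) sys₁)
  have hφ₂'' := fun z hz => KZ.second_deriv_snd (hd1 z hz) (hd2 z hz) (hp z hz)
    (eventually_of_mem (hU.mem_nhds hz) sys₂)
  exact ⟨fun z hz => (hφ₁'' z hz).1, fun z hz => (hφ₂'' z hz).1,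
    fun z hz => KZ.second_order_fst (hz₀ z hz) (hz₁ z hz) (sys₁ z hz) (sys₂ z hz) (hφ₁'' z hz).2,
    fun z hz => KZ.second_order_snd (hz₀ z hz) (hz₁ z hz) (sys₁ z hz) (sys₂ z hz) (hφ₂'' z hz).2⟩
end

section
/- Let κ be a nonzero complex number, set h = 3/(4κ), and let U = {z ∈ ℂ : 0 < |z| < 1} \ (−1, 0]. Suppose φ : ℂ → ℂ is complex differentiable on U with derivative complex differentiable on U, and satisfies κ²·z·(1−z)·φ″(z) − κ·((κ+2)·z − 1)·φ′(z) + (κ/(2z) − 3/(4·z·(1−z)))·φ(z) = 0 for all z ∈ U. Define f(z) = z^{2h−1}·(1−z)^{2h}·φ(z), where complex powers are taken with the principal branch. Then f is twice complex differentiable on U and satisfies the hypergeometric-type equation κ²·z·(1−z)·f″(z) + κ·(κ·(2−3z) − 2·(1−2z))·f′(z) − (κ−1)·(κ−3)·f(z) = 0 for all z ∈ U. -/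
open Complex

def slitDisk : Set ℂ :=
  {z : ℂ | 0 < ‖z‖ ∧ ‖z‖ < 1} \
    {z : ℂ | z.im = 0 ∧ z.re ∈ Set.Ioc (-1 : ℝ) 0}

/-!
Write `f = m φ` with `m z = z ^ a (1 - z) ^ b`, `a = 2h - 1`, `b = 2h`. Since `m' = m L` for the
logarithmic derivative `L z = a / z - b / (1 - z)`, one gets `f' = m (φ' + L φ)` and
`f'' = m (φ'' + 2 L φ' + (L² + L') φ)`. Substituting these into the hypergeometric operator and
dividing by `m` gives exactly the left-hand side of the equation for `φ`; the only input is
`2 κ b = 3`, i.e. `h = 3 / (4 κ)`.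
-/

lemma slitDisk_eq : slitDisk = Metric.ball (0 : ℂ) 1 ∩ slitPlane := by
  ext z
  simp only [slitDisk, Set.mem_sdiff, Set.mem_ofPred_eq, Set.mem_inter_iff, Metric.mem_ball,
    dist_zero_right, mem_slitPlane_iff, Set.mem_Ioc, norm_pos_iff]
  have hre : |z.re| ≤ ‖z‖ := abs_re_le_norm z
  constructor
  · rintro ⟨⟨-, hz1⟩, hcut⟩
    refine ⟨hz1, ?_⟩
    by_contra! hsl
    exact hcut ⟨hsl.2, by linarith [neg_abs_le z.re], hsl.1⟩
  · rintro ⟨hz1, hsl⟩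
    refine ⟨⟨slitPlane_ne_zero hsl, hz1⟩, ?_⟩
    rintro ⟨him, -, hre0⟩
    rcases hsl with h | h
    · linarith
    · exact h him

lemma isOpen_slitDisk : IsOpen slitDisk := by
  rw [slitDisk_eq]
  exact Metric.isOpen_ball.inter isOpen_slitPlane

lemma mem_slitPlane_of_mem_slitDisk {z : ℂ} (hz : z ∈ slitDisk) : z ∈ slitPlane := by
  rw [slitDisk_eq] at hz
  exact hz.2

lemma one_sub_mem_slitPlane_of_mem_slitDisk {z : ℂ} (hz : z ∈ slitDisk) : 1 - z ∈ slitPlane := by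
  rw [slitDisk_eq] at hz
  simpa [sub_eq_add_neg] using mem_slitPlane_of_norm_lt_one (z := -z) (by simpa using hz.1)

section LogDeriv

variable {𝕜 : Type*} [NontriviallyNormedField 𝕜] {m L φ : 𝕜 → 𝕜}

theorem HasDerivAt.mul_of_logDeriv {φ' z : 𝕜} (hm : HasDerivAt m (m z * L z) z)
    (hφ : HasDerivAt φ φ' z) :
    HasDerivAt (fun w => m w * φ w) (m z * (φ' + L z * φ z)) z :=
  (hm.mul hφ).congr_deriv (by ring)

variable {U : Set 𝕜} {L' : 𝕜 → 𝕜}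

theorem hasDerivAt_deriv_mul_of_logDeriv (hU : IsOpen U)
    (hm : ∀ z ∈ U, HasDerivAt m (m z * L z) z) (hL : ∀ z ∈ U, HasDerivAt L (L' z) z)
    (hφ : ∀ z ∈ U, DifferentiableAt 𝕜 φ z) (hφ' : ∀ z ∈ U, DifferentiableAt 𝕜 (deriv φ) z)
    {z : 𝕜} (hz : z ∈ U) :
    HasDerivAt (deriv fun w => m w * φ w)
      (m z * (deriv (deriv φ) z + 2 * L z * deriv φ z + (L z ^ 2 + L' z) * φ z)) z := by
  have hfirst : deriv (fun w => m w * φ w) =ᶠ[nhds z] fun w => m w * (deriv φ w + L w * φ w) := by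
    filter_upwards [hU.mem_nhds hz] with w hw
    exact ((hm w hw).mul_of_logDeriv (hφ w hw).hasDerivAt).deriv
  have hψ : HasDerivAt (fun w => deriv φ w + L w * φ w)
      (deriv (deriv φ) z + (L' z * φ z + L z * deriv φ z)) z :=
    (hφ' z hz).hasDerivAt.add ((hL z hz).mul (hφ z hz).hasDerivAt)
  exact (((hm z hz).mul_of_logDeriv hψ).congr_deriv (by ring)).congr_of_eventuallyEq hfirst

end LogDeriv

theorem hasDerivAt_cpow_mul_one_sub_cpow {a b z : ℂ} (hz : z ∈ slitPlane)
    (h1z : 1 - z ∈ slitPlane) :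
    HasDerivAt (fun w => w ^ a * (1 - w) ^ b)
      (z ^ a * (1 - z) ^ b * (a / z - b / (1 - z))) z := by
  have hA := (hasDerivAt_id z).cpow_const (c := a) hz
  have hB := ((hasDerivAt_id z).const_sub 1).cpow_const (c := b) h1z
  refine (hA.mul hB).congr_deriv ?_
  simp only [id, cpow_sub _ _ (slitPlane_ne_zero hz), cpow_sub _ _ (slitPlane_ne_zero h1z),
    cpow_one]
  ring

theorem hasDerivAt_div_sub_div_one_sub {a b z : ℂ} (hz : z ≠ 0) (h1z : 1 - z ≠ 0) :
    HasDerivAt (fun w => a / w - b / (1 - w)) (-a / z ^ 2 - b / (1 - z) ^ 2) z := by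
  have hA := (hasDerivAt_const z a).div (hasDerivAt_id z) hz
  have hB := (hasDerivAt_const z b).div ((hasDerivAt_id z).const_sub 1) h1z
  refine (hA.sub hB).congr_deriv ?_
  simp only [id]
  ring

theorem hypergeometric_gauge_identity {κ a b z : ℂ} (hb : 2 * κ * b = 3) (ha : a = b - 1)
    (hz : z ≠ 0) (h1z : 1 - z ≠ 0) (p p' p'' : ℂ) :
    κ ^ 2 * z * (1 - z) * (p'' + 2 * (a / z - b / (1 - z)) * p'
        + ((a / z - b / (1 - z)) ^ 2 + (-a / z ^ 2 - b / (1 - z) ^ 2)) * p)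
      + κ * (κ * (2 - 3 * z) - 2 * (1 - 2 * z)) * (p' + (a / z - b / (1 - z)) * p)
      - (κ - 1) * (κ - 3) * p
    = κ ^ 2 * z * (1 - z) * p'' - κ * ((κ + 2) * z - 1) * p'
      + (κ / (2 * z) - 3 / (4 * z * (1 - z))) * p := by
  have hκ : κ ≠ 0 := by rintro rfl; norm_num at hb
  obtain rfl : b = 3 / (2 * κ) := by
    rw [eq_div_iff (by simpa using hκ)]
    linear_combination hb
  subst ha
  field_simp
  ring

/-- **Section 3.1, equation (3.9) → (3.11).** If `φ` satisfies the second-order ODE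
`κ²z(1−z)φ″ − κ((κ+2)z−1)φ′ + (κ/(2z) − 3/(4z(1−z)))φ = 0` on the slit disk, then
`f(z) = z^{2h−1}(1−z)^{2h}φ(z)` with `h = 3/(4κ)` (principal branch powers) is twice
holomorphic on the slit disk and satisfies the hypergeometric-type equation
`κ²z(1−z)f″ + κ(κ(2−3z) − 2(1−2z))f′ − (κ−1)(κ−3)f = 0`. -/
theorem hypergeometric_substitution_one (κ : ℂ) (hκ : κ ≠ 0) (φ : ℂ → ℂ)
    (hd : ∀ z ∈ slitDisk, DifferentiableAt ℂ φ z)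
    (hd' : ∀ z ∈ slitDisk, DifferentiableAt ℂ (deriv φ) z)
    (ode : ∀ z ∈ slitDisk, κ ^ 2 * z * (1 - z) * deriv (deriv φ) z
        - κ * ((κ + 2) * z - 1) * deriv φ z
        + (κ / (2 * z) - 3 / (4 * z * (1 - z))) * φ z = 0)
    (f : ℂ → ℂ)
    (hf : f = fun z => z ^ (2 * (3 / (4 * κ)) - 1) * (1 - z) ^ (2 * (3 / (4 * κ))) * φ z) :
    (∀ z ∈ slitDisk, DifferentiableAt ℂ f z) ∧
    (∀ z ∈ slitDisk, DifferentiableAt ℂ (deriv f) z) ∧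
    (∀ z ∈ slitDisk, κ ^ 2 * z * (1 - z) * deriv (deriv f) z
        + κ * (κ * (2 - 3 * z) - 2 * (1 - 2 * z)) * deriv f z
        - (κ - 1) * (κ - 3) * f z = 0) := by
  have hb : 2 * κ * (2 * (3 / (4 * κ))) = 3 := by field_simp; ring
  set b : ℂ := 2 * (3 / (4 * κ))
  set m : ℂ → ℂ := fun w => w ^ (b - 1) * (1 - w) ^ b
  set L : ℂ → ℂ := fun w => (b - 1) / w - b / (1 - w)
  obtain rfl : f = fun w => m w * φ w := hf
  have hzs (z) (hz : z ∈ slitDisk) := mem_slitPlane_of_mem_slitDisk hz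
  have h1zs (z) (hz : z ∈ slitDisk) := one_sub_mem_slitPlane_of_mem_slitDisk hz
  have hm : ∀ z ∈ slitDisk, HasDerivAt m (m z * L z) z :=
    fun z hz => hasDerivAt_cpow_mul_one_sub_cpow (hzs z hz) (h1zs z hz)
  have hL : ∀ z ∈ slitDisk, HasDerivAt L (-(b - 1) / z ^ 2 - b / (1 - z) ^ 2) z :=
    fun z hz => hasDerivAt_div_sub_div_one_sub (slitPlane_ne_zero (hzs z hz))
      (slitPlane_ne_zero (h1zs z hz))
  have hf' (z) (hz : z ∈ slitDisk) := (hm z hz).mul_of_logDeriv (hd z hz).hasDerivAt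
  have hf'' (z) (hz : z ∈ slitDisk) :=
    hasDerivAt_deriv_mul_of_logDeriv isOpen_slitDisk hm hL hd hd' hz
  refine ⟨fun z hz => (hf' z hz).differentiableAt, fun z hz => (hf'' z hz).differentiableAt,
    fun z hz => ?_⟩
  rw [(hf'' z hz).deriv, (hf' z hz).deriv]
  linear_combination m z * (ode z hz +
    hypergeometric_gauge_identity hb rfl (slitPlane_ne_zero (hzs z hz))
      (slitPlane_ne_zero (h1zs z hz)) (φ z) (deriv φ z) (deriv (deriv φ) z))
end

section
/- Let C and D be abelian categories and F : C ⥤ D an additive functor that preserves cokernels. Let W and X be objects of C equipped with exact sequences Q_W →^{q_W} P_W →^{p_W} W → 0 and Q_X →^{q_X} P_X →^{p_X} X → 0 (so p_W and p_X are epimorphisms, the image of q_W equals the kernel of p_W, and the image of q_X equals the kernel of p_X). Assume that F(P_W) and F(Q_W) are projective objects of D, that the maps Hom_C(P_W, P_X) → Hom_D(F(P_W), F(P_X)) and Hom_C(Q_W, Q_X) → Hom_D(F(Q_W), F(Q_X)) induced by F are surjective, and that the map Hom_C(Q_W, P_X) → Hom_D(F(Q_W), F(P_X)) induced by F is injective.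 Then the map Hom_C(W, X) → Hom_D(F(W), F(X)) induced by F is surjective. -/
open CategoryTheory CategoryTheory.Limits

/-- **Proposition 7.8 (abstract core).** Let `F : C ⥤ D` be an additive functor between
abelian categories preserving cokernels.  Suppose `W` and `X` admit presentations
`Q_W → P_W → W → 0` and `Q_X → P_X → X → 0` with `F(P_W)`, `F(Q_W)` projective, such
that `F` is surjective on `Hom(P_W, P_X)` and `Hom(Q_W, Q_X)` and injective on
`Hom(Q_W, P_X)`.  Then `F` is surjective on `Hom(W, X)`. -/
theorem hom_surjective_of_presentations {C D : Type*} [Category C] [Category D]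
    [Abelian C] [Abelian D]
    (F : C ⥤ D) [F.Additive]
    (hcoker : ∀ {A B : C} (f : A ⟶ B), PreservesColimit (parallelPair f 0) F)
    {W X QW PW QX PX : C}
    (qW : QW ⟶ PW) (pW : PW ⟶ W) (qX : QX ⟶ PX) (pX : PX ⟶ X)
    (hpW : Epi pW) (hpX : Epi pX)
    (wW : qW ≫ pW = 0) (wX : qX ≫ pX = 0)
    (hexW : (ShortComplex.mk qW pW wW).Exact)
    (hexX : (ShortComplex.mk qX pX wX).Exact)
    (hPW : Projective (F.obj PW)) (hQW : Projective (F.obj QW))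
    (hsurjP : Function.Surjective fun g : PW ⟶ PX => F.map g)
    (hsurjQ : Function.Surjective fun g : QW ⟶ QX => F.map g)
    (hinj : Function.Injective fun g : QW ⟶ PX => F.map g) :
    Function.Surjective fun g : W ⟶ X => F.map g := by
  intro φ
  -- Mapped exact sequences
  have hexWD : ((ShortComplex.mk qW pW wW).map F).Exact :=
    hexW.map_of_epi_of_preservesCokernel F hpW (hcoker qW)
  have hexXD : ((ShortComplex.mk qX pX wX).map F).Exact :=
    hexX.map_of_epi_of_preservesCokernel F hpX (hcoker qX)
  have hFpW : IsColimit (CokernelCofork.ofπ (F.map pW) ((ShortComplex.mk qW pW wW).map F).zero) :=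
    CokernelCofork.mapIsColimit _ hexW.gIsCokernel F
  have hepiFpW : Epi (F.map pW) := epi_of_isColimit_cofork hFpW
  have hepiFpX : Epi (F.map pX) := by
    have := CokernelCofork.mapIsColimit _ hexX.gIsCokernel F
    exact epi_of_isColimit_cofork this
  -- lift `F pW ≫ φ` through `F pX` using projectivity of `F PW`
  obtain ⟨α, hα⟩ := Projective.factors (P := F.obj PW) (F.map pW ≫ φ) (F.map pX)
  obtain ⟨a, ha⟩ := hsurjP α
  replace ha : F.map a = α := ha
  -- `F (qW ≫ a) ≫ F pX = 0`
  have hz : F.map (qW ≫ a) ≫ F.map pX = 0 := by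
    rw [F.map_comp, ha, Category.assoc, hα, ← Category.assoc, ← F.map_comp, wW,
      F.map_zero, zero_comp]
  -- lift through `F qX` using projectivity of `F QW` and exactness
  have hlift := hexXD.liftFromProjective_comp (P := F.obj QW) (F.map (qW ≫ a)) hz
  obtain ⟨b, hb⟩ := hsurjQ (hexXD.liftFromProjective (F.map (qW ≫ a)) hz)
  replace hb : F.map b = hexXD.liftFromProjective (F.map (qW ≫ a)) hz := hb
  have hbq : b ≫ qX = qW ≫ a := by
    apply hinj
    show F.map (b ≫ qX) = F.map (qW ≫ a)
    rw [F.map_comp, hb]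
    exact hlift
  -- therefore `qW ≫ (a ≫ pX) = 0`, so it factors through the cokernel `pW`
  have hfact : qW ≫ (a ≫ pX) = 0 := by
    rw [← Category.assoc, ← hbq, Category.assoc, wX, comp_zero]
  let g : W ⟶ X := hexW.gIsCokernel.desc (CokernelCofork.ofπ (a ≫ pX) hfact)
  have hg : pW ≫ g = a ≫ pX := Cofork.IsColimit.π_desc hexW.gIsCokernel
  refine ⟨g, ?_⟩
  show F.map g = φ
  rw [← cancel_epi (F.map pW), ← F.map_comp, hg, F.map_comp, ha]
  exact hα
end
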